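/- Let H ∈ M_d(ℂ) be Hermitian with d distinct eigenvalues E₁,…,E_d and orthonormal eigenbasis |1⟩,…,|d⟩; set L₀[ρ] = −i[H,ρ], let G₀ be the pinching G₀[X] = Σ_j ⟨j|X|j⟩|j⟩⟨j|, and let L₀⁻¹ be defined on matrices with vanishing diagonal in this basis by L₀⁻¹[X] = i Σ_{j≠k} (⟨j|X|k⟩/(E_j−E_k)) |j⟩⟨k|. Let D[ρ] = Σ_α (h_α ρ h_α† − (1/2){h_α†h_α, ρ}) be a Lindblad dissipator, set D̂ = G₀∘D∘G₀, and assume the restriction of D̂ to the space of traceless diagonal matrices is injective, with inverse D̂⁻¹ defined on that space (note G₀∘D maps into traceless diagonal matrices). Let ρ₀ be a diagonal density matrix with D̂[ρ₀] = 0, and define recursively ρ_{n+1} = −(id − D̂⁻¹∘G₀∘D)[L₀⁻¹[D[ρ_n]]]. Then for every n ≥ 0: G₀[D[ρ_n]] = 0 (so D[ρ_n] has vanishing diagonal and the recursion is well defined), Tr(ρ_{n+1}) = 0, and L₀[ρ_{n+1}] = −D[ρ_n]; consequently the formal power series Σ_n εⁿρ_n satisfies (L₀ + εD)[Σ_n εⁿρ_n]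 = 0 order by order in ε. -/
import Mathlib


open Matrix
open scoped ComplexOrder

/-- The pinching (projection onto the diagonal) with respect to the orthonormal basis `v`. -/
noncomputable def pinch {d : ℕ} (v : Fin d → (Fin d → ℂ)) (X : Matrix (Fin d) (Fin d) ℂ) :
    Matrix (Fin d) (Fin d) ℂ :=
  ∑ j, (star (v j) ⬝ᵥ X *ᵥ v j) • vecMulVec (v j) (star (v j))

/-- The Hamiltonian generator `L₀[ρ] = −i[H, ρ]`. -/
noncomputable def hamGen {d : ℕ} (H ρ : Matrix (Fin d) (Fin d) ℂ) :
    Matrix (Fin d) (Fin d) ℂ :=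
  (-Complex.I) • (H * ρ - ρ * H)

/-- The Lindblad dissipator built from the Kraus operators `h`. -/
noncomputable def dissOf {d n : ℕ} (h : Fin n → Matrix (Fin d) (Fin d) ℂ)
    (ρ : Matrix (Fin d) (Fin d) ℂ) : Matrix (Fin d) (Fin d) ℂ :=
  ∑ α, (h α * ρ * (h α)ᴴ -
    ((1 : ℂ)/2) • ((h α)ᴴ * h α * ρ + ρ * ((h α)ᴴ * h α)))

/-- The inverse of `L₀` on matrices with vanishing diagonal (eigenbasis `v`, eigenvalues `E`). -/
noncomputable def hamGenInv {d : ℕ} (E : Fin d → ℝ) (v : Fin d → (Fin d → ℂ))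
    (X : Matrix (Fin d) (Fin d) ℂ) : Matrix (Fin d) (Fin d) ℂ :=
  Complex.I • ∑ j, ∑ k,
    if j = k then 0 else
      ((star (v j) ⬝ᵥ X *ᵥ v k) / ((E j : ℂ) - (E k : ℂ))) • vecMulVec (v j) (star (v k))


variable {d : ℕ}

lemma mul_vmv (M : Matrix (Fin d) (Fin d) ℂ) (a b : Fin d → ℂ) :
    M * vecMulVec a b = vecMulVec (M *ᵥ a) b := by
  ext i l
  simp [Matrix.mul_apply, vecMulVec_apply, Matrix.mulVec, dotProduct, Finset.sum_mul, mul_assoc]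

lemma vmv_mul (M : Matrix (Fin d) (Fin d) ℂ) (a b : Fin d → ℂ) :
    vecMulVec a b * M = vecMulVec a (b ᵥ* M) := by
  ext i l
  simp [Matrix.mul_apply, vecMulVec_apply, Matrix.vecMul, dotProduct, Finset.mul_sum, mul_assoc]

lemma vmv_mulVec (a b x : Fin d → ℂ) :
    vecMulVec a b *ᵥ x = (b ⬝ᵥ x) • a := by
  ext i
  simp [Matrix.mulVec, vecMulVec_apply, dotProduct, Finset.mul_sum, Finset.sum_mul]
  exact Finset.sum_congr rfl fun m _ => by ring

lemma vmv_mul_vmv (a b c e : Fin d → ℂ) :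
    vecMulVec a b * vecMulVec c e = (b ⬝ᵥ c) • vecMulVec a e := by
  ext i l
  simp [Matrix.mul_apply, vecMulVec_apply, dotProduct, Finset.sum_mul, Finset.mul_sum]
  ring_nf
  apply Finset.sum_congr rfl; intros; ring

lemma trace_vmv (a b : Fin d → ℂ) : (vecMulVec a b).trace = a ⬝ᵥ b := by
  simp [Matrix.trace, Matrix.diag, vecMulVec_apply, dotProduct]

lemma vmv_smul_left (c : ℂ) (a b : Fin d → ℂ) : vecMulVec (c • a) b = c • vecMulVec a b := by
  ext i l; simp [vecMulVec_apply, smul_eq_mul]; ring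

lemma vmv_smul_right (c : ℂ) (a b : Fin d → ℂ) : vecMulVec a (c • b) = c • vecMulVec a b := by
  ext i l; simp [vecMulVec_apply, smul_eq_mul]; ring

variable {v : Fin d → (Fin d → ℂ)}

lemma complete (hON : ∀ j k, star (v j) ⬝ᵥ v k = if j = k then (1:ℂ) else 0) :
    ∑ j, vecMulVec (v j) (star (v j)) = (1 : Matrix (Fin d) (Fin d) ℂ) := by
  set U : Matrix (Fin d) (Fin d) ℂ := Matrix.of (fun i j => v j i) with hU
  have h1 : Uᴴ * U = 1 := by
    ext j k
    simpa [Matrix.mul_apply, Matrix.conjTranspose_apply, hU, dotProduct, Matrix.one_apply]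
      using hON j k
  have h2 : U * Uᴴ = 1 := mul_eq_one_comm.mp h1
  calc ∑ j, vecMulVec (v j) (star (v j)) = U * Uᴴ := by
        ext i l
        simp [Matrix.mul_apply, Matrix.conjTranspose_apply, hU, vecMulVec_apply,
          Matrix.sum_apply, Pi.star_apply, Complex.star_def]
    _ = 1 := h2

lemma resolution (hON : ∀ j k, star (v j) ⬝ᵥ v k = if j = k then (1:ℂ) else 0)
    (X : Matrix (Fin d) (Fin d) ℂ) :
    ∑ j, ∑ k, (star (v j) ⬝ᵥ X *ᵥ v k) • vecMulVec (v j) (star (v k)) = X := by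
  have h1 := complete hON
  have key : ∀ j k, vecMulVec (v j) (star (v j)) * X * vecMulVec (v k) (star (v k))
      = (star (v j) ⬝ᵥ X *ᵥ v k) • vecMulVec (v j) (star (v k)) := by
    intro j k
    rw [vmv_mul, vmv_mul_vmv, Matrix.dotProduct_mulVec]
  calc ∑ j, ∑ k, (star (v j) ⬝ᵥ X *ᵥ v k) • vecMulVec (v j) (star (v k))
      = ∑ j, ∑ k, vecMulVec (v j) (star (v j)) * X * vecMulVec (v k) (star (v k)) := by
        exact Finset.sum_congr rfl fun j _ => Finset.sum_congr rfl fun k _ => (key j k).symm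
    _ = (∑ j, vecMulVec (v j) (star (v j))) * X * (∑ k, vecMulVec (v k) (star (v k))) := by
        rw [Finset.sum_mul, Finset.sum_mul]
        exact Finset.sum_congr rfl fun j _ => by rw [Finset.mul_sum]
    _ = X := by rw [h1, one_mul, mul_one]

lemma sum_mulVec' {ι : Type*} (s : Finset ι) (f : ι → Matrix (Fin d) (Fin d) ℂ)
    (x : Fin d → ℂ) : (∑ j ∈ s, f j) *ᵥ x = ∑ j ∈ s, f j *ᵥ x := by
  ext i
  simp only [Matrix.mulVec, dotProduct, Matrix.sum_apply, Finset.sum_apply, Finset.sum_mul]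
  rw [Finset.sum_comm]

lemma dotProduct_sum' {ι : Type*} (s : Finset ι) (u : Fin d → ℂ) (f : ι → Fin d → ℂ) :
    u ⬝ᵥ (∑ j ∈ s, f j) = ∑ j ∈ s, u ⬝ᵥ f j := by
  simp only [dotProduct, Finset.sum_apply, Finset.mul_sum]
  rw [Finset.sum_comm]

lemma pinch_entry (hON : ∀ j k, star (v j) ⬝ᵥ v k = if j = k then (1:ℂ) else 0)
    (X : Matrix (Fin d) (Fin d) ℂ) (a b : Fin d) :
    star (v a) ⬝ᵥ (pinch v X) *ᵥ v b =
      if a = b then star (v a) ⬝ᵥ X *ᵥ v a else 0 := by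
  unfold pinch
  rw [sum_mulVec']
  have : ∀ j, ((star (v j) ⬝ᵥ X *ᵥ v j) • vecMulVec (v j) (star (v j))) *ᵥ v b
      = (if j = b then star (v j) ⬝ᵥ X *ᵥ v j else 0) • v j := by
    intro j
    rw [Matrix.smul_mulVec, vmv_mulVec, hON j b]
    split_ifs <;> simp [smul_smul]
  simp only [this]
  rw [dotProduct_sum']
  have h2 : ∀ j, star (v a) ⬝ᵥ ((if j = b then star (v j) ⬝ᵥ X *ᵥ v j else 0) • v j)
      = (if j = b then star (v j) ⬝ᵥ X *ᵥ v j else 0) * (if a = j then 1 else 0) := by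
    intro j
    rw [dotProduct_smul, ← hON a j]; simp [smul_eq_mul]
  simp only [h2]
  rw [Finset.sum_eq_single a]
  · by_cases hab : a = b <;> simp [hab]
  · intro j _ hj; simp [Ne.symm hj]
  · simp

lemma pinch_idem (hON : ∀ j k, star (v j) ⬝ᵥ v k = if j = k then (1:ℂ) else 0)
    (X : Matrix (Fin d) (Fin d) ℂ) : pinch v (pinch v X) = pinch v X := by
  have key : ∀ j, star (v j) ⬝ᵥ (pinch v X) *ᵥ v j = star (v j) ⬝ᵥ X *ᵥ v j := fun j => by
    simpa using pinch_entry hON X j j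
  conv_lhs => rw [pinch]
  simp only [key]
  rfl

lemma pinch_sub (X Y : Matrix (Fin d) (Fin d) ℂ) :
    pinch v (X - Y) = pinch v X - pinch v Y := by
  unfold pinch
  rw [← Finset.sum_sub_distrib]
  exact Finset.sum_congr rfl fun j _ => by
    rw [Matrix.sub_mulVec, dotProduct_sub, sub_smul]

lemma pinch_neg (X : Matrix (Fin d) (Fin d) ℂ) : pinch v (-X) = -pinch v X := by
  have := pinch_sub (v := v) 0 X
  simpa [pinch] using this

lemma trace_pinch (hON : ∀ j k, star (v j) ⬝ᵥ v k = if j = k then (1:ℂ) else 0)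
    (X : Matrix (Fin d) (Fin d) ℂ) : (pinch v X).trace = X.trace := by
  have h1 := complete hON
  have h2 : X.trace = ((∑ j, vecMulVec (v j) (star (v j))) * X).trace := by
    rw [h1, one_mul]
  rw [h2, Finset.sum_mul, Matrix.trace_sum]
  unfold pinch
  rw [Matrix.trace_sum]
  refine Finset.sum_congr rfl fun j _ => ?_
  rw [Matrix.trace_smul, trace_vmv, vmv_mul, trace_vmv,
    dotProduct_comm (v j) (star (v j)), hON j j,
    dotProduct_comm (v j) (star (v j) ᵥ* X), ← Matrix.dotProduct_mulVec]
  simp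

variable {H : Matrix (Fin d) (Fin d) ℂ} {E : Fin d → ℝ}

lemma star_eig (hH : H.IsHermitian) (heig : ∀ j, H *ᵥ v j = (E j : ℂ) • v j) (j : Fin d) :
    star (v j) ᵥ* H = (E j : ℂ) • star (v j) := by
  calc star (v j) ᵥ* H = star (v j) ᵥ* Hᴴ := by rw [hH.eq]
    _ = star (H *ᵥ v j) := (Matrix.star_mulVec H (v j)).symm
    _ = star ((E j : ℂ) • v j) := by rw [heig]
    _ = (E j : ℂ) • star (v j) := by
        simp [star_smul, Complex.star_def, Complex.conj_ofReal]

lemma H_mul_vmv (heig : ∀ j, H *ᵥ v j = (E j : ℂ) • v j) (j k : Fin d) :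
    H * vecMulVec (v j) (star (v k)) = (E j : ℂ) • vecMulVec (v j) (star (v k)) := by
  rw [mul_vmv, heig, vmv_smul_left]

lemma vmv_mul_H (hH : H.IsHermitian) (heig : ∀ j, H *ᵥ v j = (E j : ℂ) • v j) (j k : Fin d) :
    vecMulVec (v j) (star (v k)) * H = (E k : ℂ) • vecMulVec (v j) (star (v k)) := by
  rw [vmv_mul, star_eig hH heig, vmv_smul_right]

lemma hamGen_pinch (hH : H.IsHermitian) (heig : ∀ j, H *ᵥ v j = (E j : ℂ) • v j)
    (X : Matrix (Fin d) (Fin d) ℂ) : hamGen H (pinch v X) = 0 := by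
  unfold hamGen pinch
  rw [Finset.mul_sum, Finset.sum_mul]
  have key : ∀ j : Fin d,
      H * ((star (v j) ⬝ᵥ X *ᵥ v j) • vecMulVec (v j) (star (v j)))
        = ((star (v j) ⬝ᵥ X *ᵥ v j) • vecMulVec (v j) (star (v j))) * H := by
    intro j
    rw [Matrix.mul_smul, Matrix.smul_mul, H_mul_vmv heig j j, vmv_mul_H hH heig j j]
  simp only [key, sub_self, smul_zero]

lemma hamGen_sub (X Y : Matrix (Fin d) (Fin d) ℂ) :
    hamGen H (X - Y) = hamGen H X - hamGen H Y := by
  unfold hamGen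
  rw [mul_sub, sub_mul, ← smul_sub]
  congr 1
  abel

lemma hamGen_neg (X : Matrix (Fin d) (Fin d) ℂ) : hamGen H (-X) = -hamGen H X := by
  have := hamGen_sub (H := H) 0 X
  simpa [hamGen] using this

lemma dissOf_sub {m : ℕ} (h : Fin m → Matrix (Fin d) (Fin d) ℂ)
    (X Y : Matrix (Fin d) (Fin d) ℂ) :
    dissOf h (X - Y) = dissOf h X - dissOf h Y := by
  unfold dissOf
  rw [← Finset.sum_sub_distrib]
  refine Finset.sum_congr rfl fun α _ => ?_
  rw [mul_sub, sub_mul, mul_sub, sub_mul]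
  simp only [smul_add, smul_sub]
  abel

lemma trace_dissOf {m : ℕ} (h : Fin m → Matrix (Fin d) (Fin d) ℂ)
    (X : Matrix (Fin d) (Fin d) ℂ) : (dissOf h X).trace = 0 := by
  unfold dissOf
  rw [Matrix.trace_sum]
  refine Finset.sum_eq_zero fun α _ => ?_
  rw [Matrix.trace_sub, Matrix.trace_smul, Matrix.trace_add,
    Matrix.trace_mul_cycle (h α) X (h α)ᴴ, Matrix.trace_mul_comm X ((h α)ᴴ * (h α))]
  simp only [smul_eq_mul, Matrix.mul_assoc]
  ring

lemma trace_hamGenInv (hON : ∀ j k, star (v j) ⬝ᵥ v k = if j = k then (1:ℂ) else 0)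
    (X : Matrix (Fin d) (Fin d) ℂ) : (hamGenInv E v X).trace = 0 := by
  unfold hamGenInv
  rw [Matrix.trace_smul, Matrix.trace_sum]
  rw [Finset.sum_eq_zero, smul_zero]
  intro j _
  rw [Matrix.trace_sum]
  refine Finset.sum_eq_zero fun k _ => ?_
  split_ifs with hjk
  · simp
  · rw [Matrix.trace_smul, trace_vmv, dotProduct_comm (v j) (star (v k)), hON k j]
    simp [Ne.symm hjk]

lemma hamGen_hamGenInv (hON : ∀ j k, star (v j) ⬝ᵥ v k = if j = k then (1:ℂ) else 0)
    (hH : H.IsHermitian) (heig : ∀ j, H *ᵥ v j = (E j : ℂ) • v j)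
    (hdist : Function.Injective E) (X : Matrix (Fin d) (Fin d) ℂ) :
    hamGen H (hamGenInv E v X) = X - pinch v X := by
  have hE : ∀ j k : Fin d, j ≠ k → ((E j : ℂ) - (E k : ℂ)) ≠ 0 := fun j k hjk =>
    sub_ne_zero.mpr (fun hc => hjk (hdist (Complex.ofReal_inj.mp hc)))
  unfold hamGen hamGenInv
  rw [Matrix.mul_smul, Matrix.smul_mul, ← smul_sub, smul_smul,
    show (-Complex.I * Complex.I) = (1:ℂ) by simp [Complex.I_mul_I], one_smul]
  have hmul : H * (∑ j, ∑ k, if j = k then 0 else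
        ((star (v j) ⬝ᵥ X *ᵥ v k) / ((E j : ℂ) - (E k : ℂ))) • vecMulVec (v j) (star (v k)))
      - (∑ j, ∑ k, if j = k then 0 else
        ((star (v j) ⬝ᵥ X *ᵥ v k) / ((E j : ℂ) - (E k : ℂ))) • vecMulVec (v j) (star (v k))) * H
      = ∑ j, ∑ k, (if j = k then 0 else
        (star (v j) ⬝ᵥ X *ᵥ v k) • vecMulVec (v j) (star (v k))) := by
    rw [Finset.mul_sum, Finset.sum_mul, ← Finset.sum_sub_distrib]
    refine Finset.sum_congr rfl fun j _ => ?_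
    rw [Finset.mul_sum, Finset.sum_mul, ← Finset.sum_sub_distrib]
    refine Finset.sum_congr rfl fun k _ => ?_
    split_ifs with hjk
    · simp
    · rw [Matrix.mul_smul, Matrix.smul_mul, H_mul_vmv heig, vmv_mul_H hH heig,
        smul_smul, smul_smul, ← sub_smul]
      congr 1
      rw [← mul_sub, div_mul_cancel₀ _ (hE j k hjk)]
  rw [hmul]
  have step : ∀ j : Fin d, (∑ k, if j = k then 0 else
        (star (v j) ⬝ᵥ X *ᵥ v k) • vecMulVec (v j) (star (v k)))
      = (∑ k, (star (v j) ⬝ᵥ X *ᵥ v k) • vecMulVec (v j) (star (v k)))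
        - (star (v j) ⬝ᵥ X *ᵥ v j) • vecMulVec (v j) (star (v j)) := by
    intro j
    have h1 : ∀ k : Fin d, (if j = k then 0 else
          (star (v j) ⬝ᵥ X *ᵥ v k) • vecMulVec (v j) (star (v k)))
        = (star (v j) ⬝ᵥ X *ᵥ v k) • vecMulVec (v j) (star (v k))
          - (if j = k then (star (v j) ⬝ᵥ X *ᵥ v k) • vecMulVec (v j) (star (v k)) else 0) := by
      intro k; split_ifs <;> simp
    rw [Finset.sum_congr rfl fun k _ => h1 k, Finset.sum_sub_distrib, Finset.sum_ite_eq]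
    simp
  rw [Finset.sum_congr rfl fun j _ => step j, Finset.sum_sub_distrib, resolution hON]
  rfl

theorem stmt19 (d : ℕ) (hd : 1 ≤ d)
    (H : Matrix (Fin d) (Fin d) ℂ) (hH : H.IsHermitian)
    (E : Fin d → ℝ) (hdistinct : Function.Injective E)
    (v : Fin d → (Fin d → ℂ))
    (hON : ∀ j k, star (v j) ⬝ᵥ v k = if j = k then (1:ℂ) else 0)
    (heig : ∀ j, H *ᵥ v j = (E j : ℂ) • v j)
    {n : ℕ} (h : Fin n → Matrix (Fin d) (Fin d) ℂ)
    -- `D̂ = G₀ ∘ D ∘ G₀` is injective on traceless diagonal matrices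
    (hinj : ∀ X Y : Matrix (Fin d) (Fin d) ℂ,
      pinch v X = X → X.trace = 0 → pinch v Y = Y → Y.trace = 0 →
      pinch v (dissOf h (pinch v X)) = pinch v (dissOf h (pinch v Y)) → X = Y)
    -- `Dinv` is the inverse of `D̂` on traceless diagonal matrices
    (Dinv : Matrix (Fin d) (Fin d) ℂ → Matrix (Fin d) (Fin d) ℂ)
    (hDinv : ∀ X : Matrix (Fin d) (Fin d) ℂ, pinch v X = X → X.trace = 0 →
      pinch v (Dinv X) = Dinv X ∧ (Dinv X).trace = 0 ∧
        pinch v (dissOf h (pinch v (Dinv X))) = X)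
    (ρ₀ : Matrix (Fin d) (Fin d) ℂ) (hρ₀pos : ρ₀.PosSemidef) (hρ₀tr : ρ₀.trace = 1)
    (hρ₀diag : pinch v ρ₀ = ρ₀) (hρ₀ker : pinch v (dissOf h (pinch v ρ₀)) = 0)
    (ρ : ℕ → Matrix (Fin d) (Fin d) ℂ) (hρ0 : ρ 0 = ρ₀)
    (hrec : ∀ m : ℕ, ρ (m + 1) =
      -(hamGenInv E v (dissOf h (ρ m)) -
        Dinv (pinch v (dissOf h (hamGenInv E v (dissOf h (ρ m))))))) :
    (∀ m : ℕ, pinch v (dissOf h (ρ m)) = 0) ∧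
    (∀ m : ℕ, (ρ (m + 1)).trace = 0) ∧
    (∀ m : ℕ, hamGen H (ρ (m + 1)) = -(dissOf h (ρ m))) ∧
    hamGen H (ρ 0) = 0 := by

  have hB : ∀ m : ℕ,
      pinch v (Dinv (pinch v (dissOf h (hamGenInv E v (dissOf h (ρ m)))))) =
        Dinv (pinch v (dissOf h (hamGenInv E v (dissOf h (ρ m))))) ∧
      (Dinv (pinch v (dissOf h (hamGenInv E v (dissOf h (ρ m)))))).trace = 0 ∧
      pinch v (dissOf h (Dinv (pinch v (dissOf h (hamGenInv E v (dissOf h (ρ m))))))) =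
        pinch v (dissOf h (hamGenInv E v (dissOf h (ρ m)))) := by
    intro m
    have hp := pinch_idem hON (dissOf h (hamGenInv E v (dissOf h (ρ m))))
    have ht : (pinch v (dissOf h (hamGenInv E v (dissOf h (ρ m))))).trace = 0 := by
      rw [trace_pinch hON, trace_dissOf]
    obtain ⟨h1, h2, h3⟩ := hDinv _ hp ht
    rw [h1] at h3
    exact ⟨h1, h2, h3⟩
  have key1 : ∀ m : ℕ, pinch v (dissOf h (ρ m)) = 0 := by
    intro m
    cases m with
    | zero =>
      rw [hρ0, show dissOf h ρ₀ = dissOf h (pinch v ρ₀) by rw [hρ₀diag]]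
      exact hρ₀ker
    | succ m =>
      rw [hrec m, neg_sub, dissOf_sub, pinch_sub, (hB m).2.2, sub_self]
  refine ⟨key1, ?_, ?_, ?_⟩
  · intro m
    rw [hrec m, Matrix.trace_neg, Matrix.trace_sub, trace_hamGenInv hON, (hB m).2.1]
    simp
  · intro m
    rw [hrec m, hamGen_neg, hamGen_sub,
      hamGen_hamGenInv hON hH heig hdistinct, key1 m, sub_zero,
      show hamGen H (Dinv (pinch v (dissOf h (hamGenInv E v (dissOf h (ρ m)))))) = 0 by
        rw [← (hB m).1]; exact hamGen_pinch hH heig _,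
      sub_zero]
  · rw [hρ0, ← hρ₀diag]
    exact hamGen_pinch hH heig ρ₀
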